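/- Let ζ > 0 and μ ∈ ℂ with Im μ > ζ, and define w_μ(α) := 2·Σ_{k∈ℤ} e^{|k|ζ} · sinh(|k|ζ) · e^{2i|k|μ} · e^{2ikα}, a series converging absolutely for real α. Then φ'(μ, ζ/2) + (1/(2π)) · ∫_{−π/2}^{π/2} φ'(β, ζ/2) · w_μ(β) dβ = 0; that is, the dressed energy of a wide root vanishes. -/

import Mathlib

/-!
On the real line `φ'(·, ζ/2)` is the Poisson kernel `Σₙ 2 e^{-|n|ζ} e^{2inβ}`, so its Fourier
coefficients on `[-π/2, π/2]` are `2π e^{-|k|ζ}`. With `q = e^{2iμ}` the `k`-th coefficient of `w_μ`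
is `(e^{2|k|ζ} - 1) q^{|k|}`, hence the integral equals
`2π Σₖ ((e^ζ q)^{|k|} - (e^{-ζ} q)^{|k|})`, a pair of geometric series which converge because
`Im μ > ζ`. Both `φ'(β, ζ/2)` and `φ'(μ, ζ/2)` are values of the rational function
`R(q) = 2 ((1 - q/e^ζ)⁻¹ - (1 - e^ζ q)⁻¹)` at `q = e^{2iν}`: the Poisson kernel is its Laurent
expansion on `|q| = 1`, and in the disc `|q| < e^{-ζ}`, which contains `e^{2iμ}`, its power series
is exactly minus the sum above.
-/

/-- `φ'(ν, γ) = sinh(2γ)/(sin(ν+iγ) sin(ν−iγ))`. -/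
noncomputable def phiP (ν : ℂ) (γ : ℝ) : ℂ :=
  Complex.sinh (2 * (γ : ℂ)) /
    (Complex.sin (ν + Complex.I * (γ : ℂ)) * Complex.sin (ν - Complex.I * (γ : ℂ)))

/-- The Fourier-series correction to the counting function caused by a wide root `μ`:
`w_μ(α) = 2 Σ_{k∈ℤ} e^{|k|ζ} sinh(|k|ζ) e^{2i|k|μ} e^{2ikα}`. -/
noncomputable def wFun (ζ : ℝ) (μ : ℂ) (α : ℝ) : ℂ :=
  2 * ∑' k : ℤ, (Real.exp (|(k : ℝ)| * ζ) * Real.sinh (|(k : ℝ)| * ζ) : ℂ) *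
      Complex.exp (2 * Complex.I * ((|(k : ℝ)| : ℝ) : ℂ) * μ) *
      Complex.exp (2 * Complex.I * k * (α : ℂ))

open Complex MeasureTheory
open scoped Real

section Geometric

variable {K : Type*} [NormedField K]

theorem hasSum_pow_natAbs_mul_zpow {x z : K} (h₁ : ‖x * z‖ < 1) (h₂ : ‖x * z⁻¹‖ < 1) :
    HasSum (fun n : ℤ => x ^ n.natAbs * z ^ n) ((1 - x * z)⁻¹ + (1 - x * z⁻¹)⁻¹ - 1) := by
  have hpos : HasSum (fun n : ℕ => x ^ (n : ℤ).natAbs * z ^ (n : ℤ)) (1 - x * z)⁻¹ := by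
    refine (hasSum_geometric_of_norm_lt_one h₁).congr_fun fun n => ?_
    simp only [Int.natAbs_natCast, zpow_natCast, mul_pow]
  have hneg : HasSum (fun n : ℕ => x ^ (-(n : ℤ)).natAbs * z ^ (-(n : ℤ))) (1 - x * z⁻¹)⁻¹ := by
    refine (hasSum_geometric_of_norm_lt_one h₂).congr_fun fun n => ?_
    simp only [Int.natAbs_neg, Int.natAbs_natCast, zpow_neg, zpow_natCast, mul_pow, inv_pow]
  simpa using HasSum.of_nat_of_neg (f := fun n : ℤ => x ^ n.natAbs * z ^ n) hpos hneg

theorem hasSum_pow_natAbs {x : K} (h : ‖x‖ < 1) :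
    HasSum (fun n : ℤ => x ^ n.natAbs) (2 * (1 - x)⁻¹ - 1) := by
  simpa [two_mul] using
    hasSum_pow_natAbs_mul_zpow (x := x) (z := (1 : K)) (by simpa using h) (by simpa using h)

theorem summable_norm_pow_natAbs {x : K} (h : ‖x‖ < 1) :
    Summable fun n : ℤ => ‖x ^ n.natAbs‖ := by
  simpa using (hasSum_pow_natAbs (x := ‖x‖) (by simpa using h)).summable

end Geometric

theorem norm_exp_two_mul_I_mul (ν : ℂ) : ‖exp (2 * I * ν)‖ = Real.exp (-2 * ν.im) := by
  rw [norm_exp]; simp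

theorem norm_exp_two_mul_I_mul_int_mul (n : ℤ) (t : ℝ) : ‖exp (2 * I * n * t)‖ = 1 := by
  rw [mul_assoc, norm_exp_two_mul_I_mul]
  simp

theorem norm_inv_exp_lt_one {ζ : ℝ} (hζ : 0 < ζ) : ‖(exp ζ)⁻¹‖ < 1 := by
  rw [norm_inv, norm_exp_ofReal, inv_lt_one₀ (Real.exp_pos ζ)]
  exact Real.one_lt_exp_iff.2 hζ

theorem sin_add_mul_I_mul_sin_sub_mul_I (ν γ : ℂ) :
    sin (ν + I * γ) * sin (ν - I * γ) = (cosh (2 * γ) - cos (2 * ν)) / 2 := by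
  rw [← cos_mul_I, show 2 * γ * I = ν + I * γ - (ν - I * γ) by ring,
    show 2 * ν = ν + I * γ + (ν - I * γ) by ring, cos_sub (ν + I * γ), cos_add (ν + I * γ)]
  ring

theorem phiP_half_eq (ζ : ℝ) (ν : ℂ) (h₁ : exp ζ * exp (2 * I * ν) ≠ 1)
    (h₂ : exp (2 * I * ν) ≠ exp ζ) :
    phiP ν (ζ / 2) =
      2 * ((1 - (exp ζ)⁻¹ * exp (2 * I * ν))⁻¹ - (1 - exp ζ * exp (2 * I * ν))⁻¹) := by
  have hζ : 2 * ((ζ / 2 : ℝ) : ℂ) = ζ := by push_cast; ring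
  rw [phiP, sin_add_mul_I_mul_sin_sub_mul_I, hζ, sinh, cosh, cos, exp_neg,
    show 2 * ν * I = 2 * I * ν by ring, show -(2 * ν) * I = -(2 * I * ν) by ring, exp_neg]
  have hE := exp_ne_zero ζ
  have hq := exp_ne_zero (2 * I * ν)
  generalize exp ζ = E at *
  generalize exp (2 * I * ν) = q at *
  have h₂' : E - q ≠ 0 := sub_ne_zero.2 (Ne.symm h₂)
  have hD : (E + E⁻¹) / 2 - (q + q⁻¹) / 2 = (E - q) * (E * q - 1) / (2 * E * q) := by
    field_simp; ring
  rw [hD, show 1 - E⁻¹ * q = (E - q) / E by field_simp]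
  field_simp
  ring

theorem hasSum_phiP_ofReal {ζ : ℝ} (hζ : 0 < ζ) (β : ℝ) :
    HasSum (fun n : ℤ => 2 * (exp ζ)⁻¹ ^ n.natAbs * exp (2 * I * n * β)) (phiP β (ζ / 2)) := by
  have hz : ‖exp (2 * I * β)‖ = 1 := by simp [norm_exp_two_mul_I_mul]
  have hE : ‖exp ζ‖ ≠ 1 := by rw [norm_exp_ofReal]; exact (Real.one_lt_exp_iff.2 hζ).ne'
  have hr := norm_inv_exp_lt_one hζ
  have h₁ : exp ζ * exp (2 * I * β) ≠ 1 := fun h => hE (by simpa [hz] using congr_arg norm h)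
  have h₂ : exp (2 * I * β) ≠ exp ζ := fun h => hE (by rw [← h, hz])
  have key := (hasSum_pow_natAbs_mul_zpow (x := (exp ζ)⁻¹) (z := exp (2 * I * β))
    (by simpa [hz] using hr) (by simpa [hz] using hr)).mul_left 2
  have hval : (1 - (exp ζ)⁻¹ * (exp (2 * I * β))⁻¹)⁻¹ - 1 =
      -(1 - exp ζ * exp (2 * I * β))⁻¹ := by
    have := exp_ne_zero ζ
    have := exp_ne_zero (2 * I * β)
    have : exp ζ * exp (2 * I * β) - 1 ≠ 0 := sub_ne_zero.2 h₁
    rw [show 1 - (exp ζ)⁻¹ * (exp (2 * I * β))⁻¹ =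
      (exp ζ * exp (2 * I * β) - 1) / (exp ζ * exp (2 * I * β)) by field_simp]
    field_simp
    ring
  rw [phiP_half_eq ζ β h₁ h₂, sub_eq_add_neg _ (1 - _)⁻¹, ← hval, ← add_sub_assoc]
  refine key.congr_fun fun n => ?_
  rw [← exp_int_mul]
  ring_nf

theorem summable_norm_phiP_coeff {ζ : ℝ} (hζ : 0 < ζ) :
    Summable fun n : ℤ => ‖2 * (exp ζ)⁻¹ ^ n.natAbs‖ := by
  simpa [norm_mul] using (summable_norm_pow_natAbs (norm_inv_exp_lt_one hζ)).mul_left 2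

theorem continuous_phiP_ofReal {ζ : ℝ} (hζ : 0 < ζ) : Continuous fun β : ℝ => phiP β (ζ / 2) := by
  simp_rw [← (hasSum_phiP_ofReal hζ _).tsum_eq]
  refine continuous_tsum (fun n => by fun_prop) (summable_norm_phiP_coeff hζ) fun n β => ?_
  rw [norm_mul, norm_exp_two_mul_I_mul_int_mul, mul_one]

theorem integral_exp_two_mul_I_mul_int (m : ℤ) :
    ∫ β in -(π / 2)..π / 2, exp (2 * I * m * β) = if m = 0 then (π : ℂ) else 0 := by
  split_ifs with hm
  · simp [hm]
  · have hc : 2 * I * m ≠ 0 := by simp [hm]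
    rw [integral_exp_mul_complex hc, div_eq_zero_iff, sub_eq_zero, exp_eq_exp_iff_exists_int]
    exact Or.inl ⟨m, by push_cast; ring⟩

theorem integral_mul_tsum_exp {ρ : Measure ℝ} {g : ℝ → ℂ} (hg : Integrable g ρ) {c : ℤ → ℂ}
    (hc : Summable fun n => ‖c n‖) :
    ∫ β, g β * ∑' n : ℤ, c n * exp (2 * I * n * β) ∂ρ =
      ∑' n : ℤ, c n * ∫ β, g β * exp (2 * I * n * β) ∂ρ := by
  have hint (n : ℤ) : Integrable (fun β => c n * (g β * exp (2 * I * n * β))) ρ :=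
    (hg.mul_bdd (by fun_prop) (ae_of_all _ fun β =>
      (norm_exp_two_mul_I_mul_int_mul n β).le)).const_mul (c n)
  simp_rw [← integral_const_mul]
  rw [integral_tsum_of_summable_integral_norm hint]
  · congr 1 with β
    rw [← tsum_mul_left]
    exact tsum_congr fun n => by ring
  · simpa [norm_mul, norm_exp_two_mul_I_mul_int_mul, integral_const_mul] using hc.mul_right _

theorem integral_exp_mul_tsum_exp (k : ℤ) {c : ℤ → ℂ} (hc : Summable fun n => ‖c n‖) :
    ∫ β in -(π / 2)..π / 2, exp (2 * I * k * β) * ∑' n : ℤ, c n * exp (2 * I * n * β) =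
      π * c (-k) := by
  have hπ : -(π / 2) ≤ π / 2 := by linarith [Real.pi_pos]
  rw [intervalIntegral.integral_of_le hπ,
    integral_mul_tsum_exp (Continuous.integrableOn_Ioc (by fun_prop)) hc]
  have horth (n : ℤ) : ∫ β in Set.Ioc (-(π / 2)) (π / 2), exp (2 * I * k * β) * exp (2 * I * n * β)
      = if k + n = 0 then (π : ℂ) else 0 := by
    rw [← intervalIntegral.integral_of_le hπ, ← integral_exp_two_mul_I_mul_int]
    congr 1 with β
    rw [← exp_add]
    push_cast
    ring_nf
  simp_rw [horth]
  rw [tsum_eq_single (-k) fun n hn => by rw [if_neg (by omega), mul_zero], if_pos (by ring)]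
  ring

theorem integral_phiP_mul_exp {ζ : ℝ} (hζ : 0 < ζ) (k : ℤ) :
    ∫ β in -(π / 2)..π / 2, phiP β (ζ / 2) * exp (2 * I * k * β) =
      2 * π * (exp ζ)⁻¹ ^ k.natAbs := by
  simp_rw [← (hasSum_phiP_ofReal hζ _).tsum_eq, mul_comm _ (exp (2 * I * k * _)),
    integral_exp_mul_tsum_exp k (summable_norm_phiP_coeff hζ), Int.natAbs_neg]
  ring

theorem wFun_eq_tsum (ζ : ℝ) (μ : ℂ) (α : ℝ) :
    wFun ζ μ α = ∑' k : ℤ, ((exp ζ ^ 2 * exp (2 * I * μ)) ^ k.natAbs -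
      exp (2 * I * μ) ^ k.natAbs) * exp (2 * I * k * α) := by
  rw [wFun, ← tsum_mul_left]
  refine tsum_congr fun k => ?_
  have hk : |(k : ℝ)| = (k.natAbs : ℝ) := by rw [Nat.cast_natAbs, Int.cast_abs]
  rw [hk]
  push_cast
  rw [sinh, exp_neg, show 2 * I * (k.natAbs : ℂ) * μ = k.natAbs * (2 * I * μ) by ring,
    exp_nat_mul, exp_nat_mul]
  have := exp_ne_zero ζ
  field_simp
  ring

theorem integral_phiP_mul_wFun {ζ : ℝ} (hζ : 0 < ζ) {μ : ℂ} (hμ : ζ < μ.im) :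
    ∫ β in -(π / 2)..π / 2, phiP β (ζ / 2) * wFun ζ μ β =
      2 * π * ∑' k : ℤ, ((exp ζ * exp (2 * I * μ)) ^ k.natAbs -
        ((exp ζ)⁻¹ * exp (2 * I * μ)) ^ k.natAbs) := by
  have hπ : -(π / 2) ≤ π / 2 := by linarith [Real.pi_pos]
  have hE2q : ‖exp ζ ^ 2 * exp (2 * I * μ)‖ < 1 := by
    rw [norm_mul, norm_pow, norm_exp_ofReal, norm_exp_two_mul_I_mul, ← Real.exp_nat_mul,
      ← Real.exp_add, Real.exp_lt_one_iff]
    push_cast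
    linarith
  have hq : ‖exp (2 * I * μ)‖ < 1 := by
    rw [norm_exp_two_mul_I_mul, Real.exp_lt_one_iff]
    linarith
  have hsum : Summable fun k : ℤ =>
      ‖(exp ζ ^ 2 * exp (2 * I * μ)) ^ k.natAbs - exp (2 * I * μ) ^ k.natAbs‖ :=
    ((summable_norm_pow_natAbs hE2q).add (summable_norm_pow_natAbs hq)).of_nonneg_of_le
      (fun _ => norm_nonneg _) fun _ => norm_sub_le _ _
  simp_rw [wFun_eq_tsum]
  rw [intervalIntegral.integral_of_le hπ,
    integral_mul_tsum_exp (continuous_phiP_ofReal hζ).integrableOn_Ioc hsum]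
  simp_rw [← intervalIntegral.integral_of_le hπ, integral_phiP_mul_exp hζ, ← tsum_mul_left]
  refine tsum_congr fun k => ?_
  have := exp_ne_zero ζ
  simp only [mul_pow, inv_pow]
  field_simp
  ring

/-- The dressed energy of a wide root vanishes: for `ζ > 0` and `Im μ > ζ`,
`φ'(μ, ζ/2) + (1/(2π)) ∫_{−π/2}^{π/2} φ'(β, ζ/2) w_μ(β) dβ = 0`. -/
theorem wide_root_dressed_energy_vanishes
    (ζ : ℝ) (hζ : 0 < ζ) (μ : ℂ) (hμ : ζ < μ.im) :
    phiP μ (ζ / 2) +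
        (1 / (2 * (Real.pi : ℂ))) *
          ∫ β in (-(Real.pi / 2))..(Real.pi / 2), phiP (β : ℂ) (ζ / 2) * wFun ζ μ β
      = 0 := by
  have hEq : ‖exp ζ * exp (2 * I * μ)‖ < 1 := by
    rw [norm_mul, norm_exp_ofReal, norm_exp_two_mul_I_mul, ← Real.exp_add, Real.exp_lt_one_iff]
    linarith
  have hqE : ‖(exp ζ)⁻¹ * exp (2 * I * μ)‖ < 1 := by
    rw [norm_mul, norm_inv, norm_exp_ofReal, norm_exp_two_mul_I_mul, ← Real.exp_neg,
      ← Real.exp_add, Real.exp_lt_one_iff]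
    linarith
  have hwide := phiP_half_eq ζ μ (fun h => by simp [h] at hEq) (fun h => by simp [h] at hqE)
  rw [integral_phiP_mul_wFun hζ hμ,
    ((hasSum_pow_natAbs hEq).sub (hasSum_pow_natAbs hqE)).tsum_eq, hwide]
  field_simp
  ring
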